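/- For all indices 1 ≤ i, j ≤ n, writing pᵢⱼ := ∂²p/∂xᵢ∂xⱼ, the following bracket identity holds among derivations of A: [νᵢ, νⱼ'] = pᵢⱼ·H + Δᵢⱼ, where pᵢⱼ·H denotes the derivation g ↦ pᵢⱼ·H(g). -/

import Mathlib

/-!
Danielewski setup: `A = ℂ[u, v, x₁, …, xₙ] = MvPolynomial (Fin 2 ⊕ Fin n) ℂ`,
with `u = X (Sum.inl 0)`, `v = X (Sum.inl 1)`, `xₖ = X (Sum.inr k)`.
-/

open MvPolynomial

noncomputable section

/-- The coordinate ring `ℂ[u, v, x₁, …, xₙ]`. -/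
abbrev DanA (n : ℕ) := MvPolynomial (Fin 2 ⊕ Fin n) ℂ

/-- The variable `u`. -/
def Uvar (n : ℕ) : DanA n := X (Sum.inl 0)

/-- The variable `v`. -/
def Vvar (n : ℕ) : DanA n := X (Sum.inl 1)

/-- `νᵢ = u·∂/∂xᵢ + pᵢ·∂/∂v` : `u ↦ 0`, `v ↦ pᵢ`, `xₖ ↦ δᵢₖ·u`. -/
def nuD {n : ℕ} (p : DanA n) (i : Fin n) : Derivation ℂ (DanA n) (DanA n) :=
  mkDerivation ℂ (Sum.elim
    (fun j : Fin 2 => if j = 0 then 0 else pderiv (Sum.inr i) p)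
    (fun k : Fin n => if k = i then X (Sum.inl 0) else 0))

/-- `νᵢ' = v·∂/∂xᵢ + pᵢ·∂/∂u` : `u ↦ pᵢ`, `v ↦ 0`, `xₖ ↦ δᵢₖ·v`. -/
def nuD' {n : ℕ} (p : DanA n) (i : Fin n) : Derivation ℂ (DanA n) (DanA n) :=
  mkDerivation ℂ (Sum.elim
    (fun j : Fin 2 => if j = 0 then pderiv (Sum.inr i) p else 0)
    (fun k : Fin n => if k = i then X (Sum.inl 1) else 0))

/-- `H = u·∂/∂u − v·∂/∂v` : `u ↦ u`, `v ↦ −v`, `xₖ ↦ 0`. -/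
def HD (n : ℕ) : Derivation ℂ (DanA n) (DanA n) :=
  mkDerivation ℂ (Sum.elim
    (fun j : Fin 2 => if j = 0 then X (Sum.inl 0) else - X (Sum.inl 1))
    (fun _ : Fin n => 0))

/-- `Δᵢⱼ = pᵢ·∂/∂xⱼ − pⱼ·∂/∂xᵢ` : `u, v ↦ 0`, `xₖ ↦ δⱼₖ·pᵢ − δᵢₖ·pⱼ`. -/
def DeltaD {n : ℕ} (p : DanA n) (i j : Fin n) : Derivation ℂ (DanA n) (DanA n) :=
  mkDerivation ℂ (Sum.elim
    (fun _ : Fin 2 => 0)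
    (fun k : Fin n => (if k = j then pderiv (Sum.inr i) p else 0)
      - (if k = i then pderiv (Sum.inr j) p else 0)))
/-!
Write each derivation as an `A`-linear combination of partial derivatives. The bracket then
expands by `⁅f • D, g • E⁆ = (f * D g) • E - (g * E f) • D + (f * g) • ⁅D, E⁆`, and partial
derivatives commute. Since `p` does not involve `u, v`, neither do its partials, so of
`⁅u ∂ᵢ + pᵢ ∂ᵥ, v ∂ⱼ + pⱼ ∂ᵤ⁆` only `u pᵢⱼ ∂ᵤ - pⱼ ∂ᵢ + pᵢ ∂ⱼ - v pᵢⱼ ∂ᵥ` survives.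
-/

namespace Derivation

variable {R A : Type*} [CommRing R] [CommRing A] [Algebra R A]

theorem smul_commutator_smul (f g : A) (D E : Derivation R A A) :
    ⁅f • D, g • E⁆ = (f * D g) • E - (g * E f) • D + (f * g) • ⁅D, E⁆ := by
  ext a
  simp only [commutator_apply, add_apply, sub_apply, smul_apply, smul_eq_mul, leibniz]
  ring

end Derivation

namespace MvPolynomial

section CommRing

variable {R σ : Type*} [CommRing R]

theorem commutator_pderiv (i j : σ) :
    ⁅pderiv (R := R) (σ := σ) i, pderiv (R := R) j⁆ = 0 := by
  classical
  refine derivation_ext fun k => ?_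
  rw [Derivation.commutator_apply, pderiv_X, pderiv_X]
  simp [Pi.single_apply, apply_ite (pderiv _)]

theorem pderiv_comm (i j : σ) (f : MvPolynomial σ R) :
    pderiv i (pderiv j f) = pderiv j (pderiv i f) :=
  sub_eq_zero.1 <| by
    rw [← Derivation.commutator_apply, commutator_pderiv, Derivation.zero_apply]

end CommRing

theorem pderiv_eq_zero_of_mem_supported {R σ : Type*} [CommSemiring R] {s : Set σ} {i : σ}
    {f : MvPolynomial σ R} (hf : f ∈ supported R s) (hi : i ∉ s) : pderiv i f = 0 :=
  pderiv_eq_zero_of_notMem_vars fun h => hi (mem_supported.1 hf h)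

end MvPolynomial

section Danielewski

variable {n : ℕ}

theorem nuD_eq (p : DanA n) (i : Fin n) :
    nuD p i = Uvar n • pderiv (Sum.inr i) + pderiv (Sum.inr i) p • pderiv (Sum.inl 1) := by
  refine derivation_ext ?_
  rintro (k | k)
  · fin_cases k <;> simp [nuD, Uvar, pderiv_X]
  · by_cases h : k = i <;> simp [nuD, Uvar, pderiv_X, h]

theorem nuD'_eq (p : DanA n) (i : Fin n) :
    nuD' p i = Vvar n • pderiv (Sum.inr i) + pderiv (Sum.inr i) p • pderiv (Sum.inl 0) := by
  refine derivation_ext ?_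
  rintro (k | k)
  · fin_cases k <;> simp [nuD', Vvar, pderiv_X]
  · by_cases h : k = i <;> simp [nuD', Vvar, pderiv_X, h]

theorem HD_eq : HD n = Uvar n • pderiv (Sum.inl 0) - Vvar n • pderiv (Sum.inl 1) := by
  refine derivation_ext ?_
  rintro (k | k)
  · fin_cases k <;> simp [HD, Uvar, Vvar, pderiv_X]
  · simp [HD, pderiv_X]

theorem DeltaD_eq (p : DanA n) (i j : Fin n) :
    DeltaD p i j = pderiv (Sum.inr i) p • pderiv (Sum.inr j) -
      pderiv (Sum.inr j) p • pderiv (Sum.inr i) := by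
  refine derivation_ext ?_
  rintro (k | k)
  · simp [DeltaD, pderiv_X]
  · simp [DeltaD, pderiv_X, Pi.single_apply, eq_comm]

end Danielewski

theorem stmt2_general (n : ℕ) (p : DanA n)
    (hp : p ∈ supported ℂ (Set.range (Sum.inr : Fin n → Fin 2 ⊕ Fin n)))
    (i j : Fin n) :
    ⁅nuD p i, nuD' p j⁆ =
      (pderiv (Sum.inr j) (pderiv (Sum.inr i) p)) • HD n + DeltaD p i j := by
  have hpl (k : Fin 2) (m : Fin n) : pderiv (Sum.inl k) (pderiv (Sum.inr m) p) = 0 := by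
    rw [pderiv_comm, pderiv_eq_zero_of_mem_supported hp (by simp), map_zero]
  rw [nuD_eq, nuD'_eq, HD_eq, DeltaD_eq]
  -- the Lie ring must be named: unification alone does not find it on `DanA n`
  simp only [add_lie (L := Derivation ℂ (DanA n) (DanA n)),
    lie_add (L := Derivation ℂ (DanA n) (DanA n)), Derivation.smul_commutator_smul,
    commutator_pderiv, smul_zero, hpl, pderiv_comm (Sum.inr i) (Sum.inr j) p, Uvar, Vvar,
    pderiv_X, Pi.single_eq_same, Pi.single_eq_of_ne, ne_eq, reduceCtorEq, not_false_eq_true]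
  module

/-- `[νᵢ, νⱼ'] = pᵢⱼ·H + Δᵢⱼ`, where `pᵢⱼ = ∂²p/∂xᵢ∂xⱼ`. -/
theorem stmt2 (n : ℕ) (hn : 0 < n) (p : DanA n)
    (hp : p ∈ supported ℂ (Set.range (Sum.inr : Fin n → Fin 2 ⊕ Fin n)))
    (i j : Fin n) :
    ⁅nuD p i, nuD' p j⁆ =
      (pderiv (Sum.inr j) (pderiv (Sum.inr i) p)) • HD n + DeltaD p i j :=
  stmt2_general n p hp i j

end
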